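/- Let k be a field, S = k[x_0,...,x_r], S_z = k[x_1,...,x_r], and I ⊆ S a homogeneous ideal. Then for every m ≥ 0, dim_k (S/I)_m = Σ_{i=0}^m dim_k (S_z/K_i(z,I))_{m-i}, where K_i(z,I) is the i-th partial elimination ideal of I with respect to z = (1:0:···:0). -/

import Mathlib

open MvPolynomial

/-- The `i`-th partial elimination ideal (as a set) of a homogeneous ideal
`I ⊆ S = k[x_0,…,x_r]` with respect to the point `z = (1:0:⋯:0)`. -/
def peiSet (k : Type*) [Field k] (r : ℕ) (I : Ideal (MvPolynomial (Fin (r + 1)) k))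
    (i : ℕ) : Set (MvPolynomial (Fin r) k) :=
  {g | ∃ f ∈ I, f.degreeOf 0 ≤ i ∧ (finSuccEquiv k r f).coeff i = g}

/-- The `k`-dimension of the degree-`m` graded piece of `S/I`, realized as the quotient of
the space of homogeneous polynomials of degree `m` by those lying in `I`. -/
noncomputable def gradedPieceDim (k : Type*) [Field k] {n : ℕ}
    (I : Ideal (MvPolynomial (Fin n) k)) (m : ℕ) : ℕ :=
  Module.finrank k
    ((homogeneousSubmodule (Fin n) k m) ⧸
      ((Submodule.restrictScalars k I).comap (homogeneousSubmodule (Fin n) k m).subtype))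


/-!
Filter `S_m` by `x_0`-degree, `W_i = {f ∈ S_m : deg_{x_0} f < i}`, so that `W_0 = 0` and
`W_{m+1} = S_m`. Taking the coefficient of `x_0^i` maps `W_{i+1}` onto `(S_z)_{m-i}`; since `I` is
homogeneous, every element of `K_i(z,I)_{m-i}` is the coefficient of `x_0^i` of some element of
`I_m ∩ W_{i+1}`, so modulo `K_i(z,I)` the kernel is `W_i + I_m ∩ W_{i+1}`. Hence the image of
`W_{i+1}` in `(S/I)_m` has dimension `dim (S_z/K_i(z,I))_{m-i}` more than that of `W_i`.
-/

open Module

namespace Submodule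

variable {K V Q : Type*} [DivisionRing K] [AddCommGroup V] [Module K V] [AddCommGroup Q]
  [Module K Q] [FiniteDimensional K V]

theorem finrank_map_add_finrank_inf_ker (p : Submodule K V) (f : V →ₗ[K] Q) :
    finrank K (p.map f) + finrank K (p ⊓ LinearMap.ker f : Submodule K V) = finrank K p := by
  have h := LinearMap.finrank_range_add_finrank_ker (f.domRestrict p)
  rw [LinearMap.range_domRestrict, LinearMap.ker_domRestrict] at h
  rwa [← map_comap_subtype, finrank_map_subtype_eq]

theorem finrank_map_mkQ_eq_add_of_inf_ker_eq {N A B : Submodule K V} {ψ : V →ₗ[K] Q}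
    (hAB : A ≤ B) (hψ : B.map ψ = ⊤) (hker : B ⊓ LinearMap.ker ψ = A ⊔ N ⊓ B) :
    finrank K (B.map N.mkQ) = finrank K (A.map N.mkQ) + finrank K Q := by
  have hB := finrank_map_add_finrank_inf_ker B ψ
  have hBN := finrank_map_add_finrank_inf_ker B N.mkQ
  have hAN := finrank_map_add_finrank_inf_ker A N.mkQ
  have hsup := finrank_sup_add_finrank_inf_eq A (N ⊓ B)
  rw [hψ, finrank_top, hker] at hB
  rw [ker_mkQ, inf_comm] at hBN
  rw [ker_mkQ] at hAN
  rw [← inf_assoc, inf_of_le_left (inf_le_left.trans hAB : A ⊓ N ≤ B)] at hsup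
  omega

end Submodule

namespace MvPolynomial

variable {R : Type*} [CommSemiring R] {r : ℕ}

theorem degreeOf_homogeneousComponent_le {σ : Type*} (j : σ) (n : ℕ) (φ : MvPolynomial σ R) :
    degreeOf j (homogeneousComponent n φ) ≤ degreeOf j φ :=
  degreeOf_le_iff.2 fun _ hd =>
    monomial_le_degreeOf j (Finset.mem_filter.1 (support_homogeneousComponent n φ ▸ hd)).1

theorem coeff_finSuccEquiv_homogeneousComponent {m i : ℕ} (hi : i ≤ m)
    (φ : MvPolynomial (Fin (r + 1)) R) :
    (finSuccEquiv R r (homogeneousComponent m φ)).coeff i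
      = homogeneousComponent (m - i) ((finSuccEquiv R r φ).coeff i) := by
  ext d
  have hdeg : (Finsupp.cons i d).degree = m ↔ d.degree = m - i := by
    simp only [Finsupp.degree_eq_sum, Fin.sum_univ_succ, Finsupp.cons_zero, Finsupp.cons_succ]
    omega
  simp only [finSuccEquiv_coeff_coeff, coeff_homogeneousComponent, hdeg]

theorem IsHomogeneous.coeff_finSuccEquiv {φ : MvPolynomial (Fin (r + 1)) R} {m : ℕ}
    (hφ : φ.IsHomogeneous m) (i : ℕ) :
    ((finSuccEquiv R r φ).coeff i).IsHomogeneous (m - i) := by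
  rcases le_or_gt i m with hi | hi
  · exact hφ.finSuccEquiv_coeff_isHomogeneous i (m - i) (by omega)
  · rw [Polynomial.coeff_eq_zero_of_natDegree_lt]
    · exact isHomogeneous_zero _ _ _
    · rw [natDegree_finSuccEquiv]
      exact ((degreeOf_le_totalDegree φ 0).trans hφ.totalDegree_le).trans_lt hi

theorem finSuccEquiv_rename_succ (c : MvPolynomial (Fin r) R) :
    finSuccEquiv R r (rename Fin.succ c) = Polynomial.C c := by
  rw [finSuccEquiv_apply, eval₂Hom_rename]
  conv_rhs => rw [← eval₂_eta c]
  rw [eval₂_comp_left]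
  congr 1

end MvPolynomial

namespace PartialElimination

variable {k : Type*} [Field k] {r m i : ℕ}

instance (n m : ℕ) : FiniteDimensional k (homogeneousSubmodule (Fin n) k m) :=
  Submodule.finiteDimensional_of_le fun _ hp =>
    (mem_restrictTotalDegree _ _ _).2 ((mem_homogeneousSubmodule _ _).1 hp).totalDegree_le

/-- `I_m` as a subspace of `S_m`: `gradedPieceDim k I m` is the dimension of `S_m / I_m`. -/
noncomputable abbrev homogeneousPiece {n : ℕ} (I : Ideal (MvPolynomial (Fin n) k)) (m : ℕ) :
    Submodule k (homogeneousSubmodule (Fin n) k m) :=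
  (Submodule.restrictScalars k I).comap (homogeneousSubmodule (Fin n) k m).subtype

variable (k r) in
noncomputable def x0DegreeLT (m i : ℕ) : Submodule k (homogeneousSubmodule (Fin (r + 1)) k m) :=
  ((Polynomial.degreeLT (MvPolynomial (Fin r) k) i).restrictScalars k).comap
    ((finSuccEquiv k r).toLinearMap ∘ₗ (homogeneousSubmodule (Fin (r + 1)) k m).subtype)

theorem mem_x0DegreeLT {f : homogeneousSubmodule (Fin (r + 1)) k m} :
    f ∈ x0DegreeLT k r m i ↔ ∀ j, i ≤ j → (finSuccEquiv k r f.1).coeff j = 0 :=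
  Polynomial.mem_degreeLT.trans (Polynomial.degree_lt_iff_coeff_zero _ _)

theorem mem_x0DegreeLT_succ {f : homogeneousSubmodule (Fin (r + 1)) k m} :
    f ∈ x0DegreeLT k r m (i + 1) ↔ degreeOf 0 f.1 ≤ i := by
  rw [mem_x0DegreeLT, ← natDegree_finSuccEquiv, Polynomial.natDegree_le_iff_coeff_eq_zero]
  rfl

theorem x0DegreeLT_mono : Monotone (x0DegreeLT k r m) :=
  fun _ _ h _ hf => mem_x0DegreeLT.2 fun j hj => mem_x0DegreeLT.1 hf j (h.trans hj)

theorem x0DegreeLT_zero : x0DegreeLT k r m 0 = ⊥ := by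
  refine eq_bot_iff.2 fun f hf => Subtype.ext ((finSuccEquiv k r).injective ?_)
  exact Polynomial.ext fun j => by simpa using mem_x0DegreeLT.1 hf j j.zero_le

theorem x0DegreeLT_succ_self : x0DegreeLT k r m (m + 1) = ⊤ :=
  eq_top_iff.2 fun f _ => mem_x0DegreeLT_succ.2
    ((degreeOf_le_totalDegree f.1 0).trans ((mem_homogeneousSubmodule _ _).1 f.2).totalDegree_le)

variable (k r) in
noncomputable def x0Coeff (m i : ℕ) :
    homogeneousSubmodule (Fin (r + 1)) k m →ₗ[k] homogeneousSubmodule (Fin r) k (m - i) :=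
  LinearMap.codRestrict _
    ((Polynomial.lcoeff (MvPolynomial (Fin r) k) i).restrictScalars k ∘ₗ
      (finSuccEquiv k r).toLinearMap ∘ₗ (homogeneousSubmodule (Fin (r + 1)) k m).subtype)
    fun f => (mem_homogeneousSubmodule _ _).2
      (((mem_homogeneousSubmodule _ _).1 f.2).coeff_finSuccEquiv i)

@[simp]
theorem coe_x0Coeff (f : homogeneousSubmodule (Fin (r + 1)) k m) :
    (x0Coeff k r m i f : MvPolynomial (Fin r) k) = (finSuccEquiv k r f.1).coeff i :=
  rfl

theorem map_x0Coeff_x0DegreeLT (hi : i ≤ m) :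
    (x0DegreeLT k r m (i + 1)).map (x0Coeff k r m i) = ⊤ := by
  refine eq_top_iff.2 fun c _ => ?_
  have hc := (mem_homogeneousSubmodule _ _).1 c.2
  have hlift : X 0 ^ i * rename Fin.succ c.1 ∈ homogeneousSubmodule (Fin (r + 1)) k m :=
    (mem_homogeneousSubmodule _ _).2 <| by
      simpa [Nat.add_sub_cancel' hi] using
        (isHomogeneous_X_pow (0 : Fin (r + 1)) i).mul (hc.rename_isHomogeneous (f := Fin.succ))
  have hfse : finSuccEquiv k r (X 0 ^ i * rename Fin.succ c.1)
      = Polynomial.C c.1 * Polynomial.X ^ i := by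
    rw [map_mul, map_pow, finSuccEquiv_X_zero, finSuccEquiv_rename_succ, mul_comm]
  refine ⟨⟨_, hlift⟩, mem_x0DegreeLT.2 fun j hj => ?_, Subtype.ext ?_⟩
  · rw [hfse, Polynomial.coeff_C_mul_X_pow, if_neg (by omega)]
  · simp [hfse]

theorem exists_isHomogeneous_of_mem_peiSet {I : Ideal (MvPolynomial (Fin (r + 1)) k)}
    (hI : ∀ f ∈ I, ∀ n, homogeneousComponent n f ∈ I) (hi : i ≤ m)
    {c : MvPolynomial (Fin r) k} (hc : c ∈ peiSet k r I i) (hcm : c.IsHomogeneous (m - i)) :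
    ∃ g ∈ I, g.IsHomogeneous m ∧ degreeOf 0 g ≤ i ∧ (finSuccEquiv k r g).coeff i = c := by
  obtain ⟨g, hgI, hgdeg, rfl⟩ := hc
  exact ⟨homogeneousComponent m g, hI g hgI m, homogeneousComponent_isHomogeneous m g,
    (degreeOf_homogeneousComponent_le 0 m g).trans hgdeg,
    by rw [coeff_finSuccEquiv_homogeneousComponent hi, homogeneousComponent_eq_self hcm]⟩

theorem x0DegreeLT_succ_inf_ker {I : Ideal (MvPolynomial (Fin (r + 1)) k)}
    (hI : ∀ f ∈ I, ∀ n, homogeneousComponent n f ∈ I) {K : Ideal (MvPolynomial (Fin r) k)}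
    (hK : (K : Set (MvPolynomial (Fin r) k)) = peiSet k r I i) (hi : i ≤ m) :
    x0DegreeLT k r m (i + 1) ⊓
        LinearMap.ker ((homogeneousPiece K (m - i)).mkQ ∘ₗ x0Coeff k r m i)
      = x0DegreeLT k r m i ⊔ homogeneousPiece I m ⊓ x0DegreeLT k r m (i + 1) := by
  have mem_ker {f} :
      f ∈ LinearMap.ker ((homogeneousPiece K (m - i)).mkQ ∘ₗ x0Coeff k r m i) ↔
        (finSuccEquiv k r f.1).coeff i ∈ peiSet k r I i := by
    simp [LinearMap.ker_comp, ← hK]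
  apply le_antisymm
  · rintro f ⟨hfW, hfK⟩
    obtain ⟨g, hgI, hgm, hgdeg, hgc⟩ :=
      exists_isHomogeneous_of_mem_peiSet hI hi (mem_ker.1 hfK)
        (((mem_homogeneousSubmodule _ _).1 f.2).coeff_finSuccEquiv i)
    let g' : homogeneousSubmodule (Fin (r + 1)) k m := ⟨g, (mem_homogeneousSubmodule _ _).2 hgm⟩
    have hsub : f - g' ∈ x0DegreeLT k r m i := by
      refine mem_x0DegreeLT.2 fun j hj => ?_
      rcases hj.eq_or_lt with rfl | hj
      · simp [g', hgc]
      · have hg' : g' ∈ x0DegreeLT k r m j := x0DegreeLT_mono hj (mem_x0DegreeLT_succ.2 hgdeg)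
        simp [mem_x0DegreeLT.1 hfW j hj, mem_x0DegreeLT.1 hg' j le_rfl]
    rw [← sub_add_cancel f g']
    exact Submodule.add_mem_sup hsub ⟨hgI, mem_x0DegreeLT_succ.2 hgdeg⟩
  · refine sup_le (fun f hf => ⟨x0DegreeLT_mono i.le_succ hf, mem_ker.2 ?_⟩)
      fun f ⟨hfI, hfW⟩ => ⟨hfW, mem_ker.2 ⟨f, hfI, mem_x0DegreeLT_succ.1 hfW, rfl⟩⟩
    rw [mem_x0DegreeLT.1 hf i le_rfl, ← hK]
    exact K.zero_mem

end PartialElimination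

open PartialElimination in
/-- Hilbert function via the inner projection: for a homogeneous ideal
`I ⊆ S = k[x_0,…,x_r]`, with `K_i(z,I) ⊆ S_z = k[x_1,…,x_r]` its partial elimination
ideals with respect to `z = (1:0:⋯:0)`, one has for every `m ≥ 0`
`dim_k (S/I)_m = Σ_{i=0}^m dim_k (S_z/K_i(z,I))_{m-i}`. -/
theorem hilbert_function_partial_elimination (k : Type*) [Field k] (r : ℕ)
    (I : Ideal (MvPolynomial (Fin (r + 1)) k))
    (hI : ∀ f ∈ I, ∀ n, homogeneousComponent n f ∈ I)
    (J : ℕ → Ideal (MvPolynomial (Fin r) k))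
    (hJ : ∀ i, (J i : Set (MvPolynomial (Fin r) k)) = peiSet k r I i) (m : ℕ) :
    gradedPieceDim k I m = ∑ i ∈ Finset.range (m + 1), gradedPieceDim k (J i) (m - i) := by
  have step : ∀ i ≤ m,
      finrank k ((x0DegreeLT k r m (i + 1)).map (homogeneousPiece I m).mkQ)
        = finrank k ((x0DegreeLT k r m i).map (homogeneousPiece I m).mkQ)
          + gradedPieceDim k (J i) (m - i) := fun i hi =>
    Submodule.finrank_map_mkQ_eq_add_of_inf_ker_eq (x0DegreeLT_mono i.le_succ)
      (by rw [Submodule.map_comp, map_x0Coeff_x0DegreeLT hi,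
        Submodule.map_top, Submodule.range_mkQ])
      (x0DegreeLT_succ_inf_ker hI (hJ i) hi)
  have partial_sums : ∀ n ≤ m + 1,
      finrank k ((x0DegreeLT k r m n).map (homogeneousPiece I m).mkQ)
        = ∑ i ∈ Finset.range n, gradedPieceDim k (J i) (m - i) := by
    intro n
    induction n with
    | zero => simp [x0DegreeLT_zero]
    | succ n ih => intro hn; rw [Finset.sum_range_succ, step n (by omega), ih (by omega)]
  rw [← partial_sums (m + 1) le_rfl, x0DegreeLT_succ_self, Submodule.map_top,
    Submodule.range_mkQ, finrank_top]
  rfl
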